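/- arXiv:2302.07605 — 5 statements merged into one kernel-verified Lean document; each statement's English description precedes it below -/
import Mathlib

section
/- Let v > 2, T > 0, t₀ ∈ ℝ, let μ be the time-scaling function, and let a > 0, b > 0. Suppose V : [t₀, T + t₀) → ℝ is nonnegative, differentiable, and satisfies V'(t) ≤ −a·V(t) − b·(μ'(t)/μ(t))·V(t) for all t ∈ (t₀, T + t₀). Then for all t ∈ [t₀, T + t₀), V(t) ≤ V(t₀)·exp(−a(t − t₀))·(μ(t₀)/μ(t))^b = V(t₀)·exp(−a(t − t₀))·((T + t₀ − t)/T)^(v·b). -/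
open Set Filter

/-- The time-scaling function μ with parameters v, T and initial time t₀:
μ(t) = T^v/(T + t₀ − t)^v for t < T + t₀ and μ(t) = 1 for t ≥ T + t₀. -/
noncomputable def tsf (v T t₀ : ℝ) (t : ℝ) : ℝ :=
  if t < T + t₀ then T ^ v / (T + t₀ - t) ^ v else 1

open Topology Real

/-!
With `c = v * b`, the log-derivative of the time-scaling function is `μ'/μ = v / (T + t₀ - t)`,
so the hypothesis reads `V' ≤ -(a + c / (T + t₀ - t)) V`. The integrating factor
`exp (a (t - t₀)) (T + t₀ - t) ^ (-c)` makes `V` times it nonincreasing, which is the bound.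
-/

theorem le_mul_exp_sub_of_deriv_le_neg_mul {f f' K k : ℝ → ℝ} {x y : ℝ} (hxy : x ≤ y)
    (hf : ∀ t ∈ Icc x y, HasDerivAt f (f' t) t) (hK : ∀ t ∈ Icc x y, HasDerivAt K (k t) t)
    (hle : ∀ t ∈ Ioo x y, f' t ≤ -k t * f t) :
    f y ≤ f x * exp (K x - K y) := by
  have hderiv : ∀ t ∈ Icc x y,
      HasDerivAt (fun t => f t * exp (K t)) ((f' t + k t * f t) * exp (K t)) t := fun t ht =>
    ((hf t ht).mul (hK t ht).exp).congr_deriv (by ring)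
  have hanti : AntitoneOn (fun t => f t * exp (K t)) (Icc x y) := by
    refine antitoneOn_of_hasDerivWithinAt_nonpos (convex_Icc x y)
      (fun t ht => (hderiv t ht).continuousAt.continuousWithinAt)
      (fun t ht => (hderiv t (interior_subset ht)).hasDerivWithinAt) fun t ht => ?_
    rw [interior_Icc] at ht
    exact mul_nonpos_of_nonpos_of_nonneg (by linarith [hle t ht]) (exp_pos _).le
  have hmono := hanti (left_mem_Icc.2 hxy) (right_mem_Icc.2 hxy) hxy
  rw [sub_eq_add_neg, exp_add, exp_neg, ← mul_assoc, le_mul_inv_iff₀ (exp_pos _)]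
  exact hmono

section TimeScaling

variable {v T t₀ t : ℝ}

theorem tsf_of_lt (ht : t < T + t₀) : tsf v T t₀ t = T ^ v / (T + t₀ - t) ^ v :=
  if_pos ht

theorem tsf_self (hT : 0 < T) : tsf v T t₀ t₀ = 1 := by
  rw [tsf_of_lt (by linarith), add_sub_cancel_right, div_self (rpow_pos_of_pos hT v).ne']

theorem tsf_pos (hT : 0 < T) (ht : t < T + t₀) : 0 < tsf v T t₀ t := by
  rw [tsf_of_lt ht]
  exact div_pos (rpow_pos_of_pos hT v) (rpow_pos_of_pos (by linarith) v)

theorem tsf_eventuallyEq (ht : t < T + t₀) :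
    tsf v T t₀ =ᶠ[𝓝 t] fun u => T ^ v * (T + t₀ - u) ^ (-v) := by
  filter_upwards [Iio_mem_nhds ht] with u hu
  rw [tsf_of_lt hu, rpow_neg (by linarith [mem_Iio.1 hu]), div_eq_mul_inv]

theorem hasDerivAt_tsf (ht : t < T + t₀) :
    HasDerivAt (tsf v T t₀) (v / (T + t₀ - t) * tsf v T t₀ t) t := by
  have hpos : 0 < T + t₀ - t := by linarith
  have hpow := (((hasDerivAt_id' t).const_sub (T + t₀)).rpow_const (p := -v) (Or.inl hpos.ne')).const_mul (T ^ v)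
  rw [(tsf_eventuallyEq ht).eq_of_nhds]
  refine (hpow.congr_of_eventuallyEq (tsf_eventuallyEq ht)).congr_deriv ?_
  rw [rpow_sub_one hpos.ne']
  ring

theorem deriv_tsf_div_tsf (hT : 0 < T) (ht : t < T + t₀) :
    deriv (tsf v T t₀) t / tsf v T t₀ t = v / (T + t₀ - t) := by
  rw [(hasDerivAt_tsf ht).deriv, mul_div_cancel_right₀ _ (tsf_pos hT ht).ne']

theorem tsf_self_div_tsf_rpow (hT : 0 < T) (ht : t < T + t₀) (b : ℝ) :
    (tsf v T t₀ t₀ / tsf v T t₀ t) ^ b = ((T + t₀ - t) / T) ^ (v * b) := by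
  have hpos : 0 ≤ T + t₀ - t := by linarith
  rw [tsf_self hT, tsf_of_lt ht, one_div_div, ← div_rpow hpos hT.le,
    ← rpow_mul (div_nonneg hpos hT.le)]

end TimeScaling

theorem lyapunov_prescribed_time_bound_general (v T t₀ a b : ℝ) (hT : 0 < T)
    (V V' : ℝ → ℝ)
    (hV_deriv : ∀ t ∈ Set.Ico t₀ (T + t₀), HasDerivAt V (V' t) t)
    (hV_ineq : ∀ t ∈ Set.Ioo t₀ (T + t₀),
      V' t ≤ -a * V t - b * (deriv (tsf v T t₀) t / tsf v T t₀ t) * V t) :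
    ∀ t ∈ Set.Ico t₀ (T + t₀),
      V t ≤ V t₀ * Real.exp (-a * (t - t₀)) * (tsf v T t₀ t₀ / tsf v T t₀ t) ^ b ∧
      V t₀ * Real.exp (-a * (t - t₀)) * (tsf v T t₀ t₀ / tsf v T t₀ t) ^ b
        = V t₀ * Real.exp (-a * (t - t₀)) * ((T + t₀ - t) / T) ^ (v * b) := by
  rintro t ⟨ht₀, htT⟩
  rw [tsf_self_div_tsf_rpow hT htT]
  refine ⟨?_, rfl⟩
  have hIcc : Icc t₀ t ⊆ Ico t₀ (T + t₀) := Icc_subset_Ico_right htT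
  have hIoo : Ioo t₀ t ⊆ Ioo t₀ (T + t₀) := Ioo_subset_Ioo_right htT.le
  let K : ℝ → ℝ := fun u => a * (u - t₀) - v * b * log (T + t₀ - u)
  have hK : ∀ u ∈ Icc t₀ t, HasDerivAt K (a + v * b / (T + t₀ - u)) u := fun u hu => by
    have hlog := ((hasDerivAt_id' u).const_sub (T + t₀)).log (sub_pos.2 (hIcc hu).2).ne'
    exact ((((hasDerivAt_id' u).sub_const t₀).const_mul a).sub
      (hlog.const_mul (v * b))).congr_deriv (by ring)
  have hineq : ∀ u ∈ Ioo t₀ t, V' u ≤ -(a + v * b / (T + t₀ - u)) * V u := fun u hu => by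
    have h := hV_ineq u (hIoo hu)
    rw [deriv_tsf_div_tsf hT (hIoo hu).2] at h
    linarith [show b * (v / (T + t₀ - u)) * V u = v * b / (T + t₀ - u) * V u by ring]
  have hfactor : exp (K t₀ - K t) = exp (-a * (t - t₀)) * ((T + t₀ - t) / T) ^ (v * b) := by
    rw [rpow_def_of_pos (div_pos (by linarith) hT), log_div (by linarith) hT.ne', ← exp_add]
    simp only [K, add_sub_cancel_right]
    ring_nf
  rw [mul_assoc, ← hfactor]
  exact le_mul_exp_sub_of_deriv_le_neg_mul ht₀ (fun u hu => hV_deriv u (hIcc hu)) hK hineq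

/-- If V ≥ 0 is differentiable on [t₀, T + t₀) and V' ≤ −a·V − b·(μ'/μ)·V on (t₀, T + t₀)
with a, b > 0, then V(t) ≤ V(t₀)·exp(−a(t − t₀))·(μ(t₀)/μ(t))^b
= V(t₀)·exp(−a(t − t₀))·((T + t₀ − t)/T)^(v·b) on [t₀, T + t₀). -/
theorem lyapunov_prescribed_time_bound (v T t₀ a b : ℝ) (hv : 2 < v) (hT : 0 < T)
    (ha : 0 < a) (hb : 0 < b) (V V' : ℝ → ℝ)
    (hV_nonneg : ∀ t ∈ Set.Ico t₀ (T + t₀), 0 ≤ V t)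
    (hV_deriv : ∀ t ∈ Set.Ico t₀ (T + t₀), HasDerivAt V (V' t) t)
    (hV_ineq : ∀ t ∈ Set.Ioo t₀ (T + t₀),
      V' t ≤ -a * V t - b * (deriv (tsf v T t₀) t / tsf v T t₀ t) * V t) :
    ∀ t ∈ Set.Ico t₀ (T + t₀),
      V t ≤ V t₀ * Real.exp (-a * (t - t₀)) * (tsf v T t₀ t₀ / tsf v T t₀ t) ^ b ∧
      V t₀ * Real.exp (-a * (t - t₀)) * (tsf v T t₀ t₀ / tsf v T t₀ t) ^ b
        = V t₀ * Real.exp (-a * (t - t₀)) * ((T + t₀ - t) / T) ^ (v * b) :=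
  lyapunov_prescribed_time_bound_general v T t₀ a b hT V V' hV_deriv hV_ineq
end

section
/- Let v > 2, T > 0, t₀ ∈ ℝ, let μ be the time-scaling function extended by μ(t) = 1 for t ≥ T + t₀, and let a > 0, b > 0. Suppose V : [t₀, ∞) → ℝ is nonnegative, continuous, differentiable on (t₀, T + t₀) ∪ (T + t₀, ∞), and satisfies V'(t) ≤ −a·V(t) − b·(μ'(t)/μ(t))·V(t) wherever differentiable. Then V(t) → 0 as t → (T + t₀)⁻, and V(t) = 0 for all t ≥ T + t₀ (prescribed-time convergence with prescribed time T). -/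
open Set Filter

/-!
On `[t₀, T + t₀)` the logarithmic derivative of the time scaling is `v / (T + t₀ - t)`, so the
hypothesis reads `V' ≤ -(a + b v / (T + t₀ - t)) V`. With the integrating factor `exp φ`,
`φ t = a t - b v log (T + t₀ - t)`, the product `exp φ · V` is antitone, hence
`0 ≤ V t ≤ exp (φ t₀ - φ t) V t₀`, which tends to `0` because `φ → ∞` at `T + t₀`.
Continuity gives `V (T + t₀) = 0`; beyond `T + t₀` the scaling is constant, the same argument
with `φ t = a t` shows `V t ≤ exp (a (T + t₀ - t)) V (T + t₀) = 0`.
-/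

open Real Topology

section IntegratingFactor

variable {D : Set ℝ} {V V' φ k : ℝ → ℝ}

theorem antitoneOn_exp_mul_of_deriv_le (hD : Convex ℝ D) (hV : ContinuousOn V D)
    (hφ : ContinuousOn φ D) (hV' : ∀ t ∈ interior D, HasDerivAt V (V' t) t)
    (hφ' : ∀ t ∈ interior D, HasDerivAt φ (k t) t)
    (hle : ∀ t ∈ interior D, V' t ≤ -k t * V t) :
    AntitoneOn (fun t => exp (φ t) * V t) D := by
  have hderiv : ∀ t ∈ interior D,
      HasDerivAt (fun t => exp (φ t) * V t) (exp (φ t) * (k t * V t + V' t)) t := fun t ht => by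
    refine ((hφ' t ht).exp.fun_mul (hV' t ht)).congr_deriv ?_
    ring
  refine antitoneOn_of_deriv_nonpos hD ((continuous_exp.comp_continuousOn hφ).mul hV)
    (fun t ht => (hderiv t ht).differentiableAt.differentiableWithinAt) fun t ht => ?_
  rw [(hderiv t ht).deriv]
  exact mul_nonpos_of_nonneg_of_nonpos (exp_pos _).le (by linarith [hle t ht])

theorem le_exp_sub_mul_of_deriv_le (hD : Convex ℝ D) (hV : ContinuousOn V D)
    (hφ : ContinuousOn φ D) (hV' : ∀ t ∈ interior D, HasDerivAt V (V' t) t)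
    (hφ' : ∀ t ∈ interior D, HasDerivAt φ (k t) t)
    (hle : ∀ t ∈ interior D, V' t ≤ -k t * V t) {t₁ t : ℝ} (ht₁ : t₁ ∈ D)
    (ht : t ∈ D) (h : t₁ ≤ t) : V t ≤ exp (φ t₁ - φ t) * V t₁ := by
  have := antitoneOn_exp_mul_of_deriv_le hD hV hφ hV' hφ' hle ht₁ ht h
  rw [exp_sub, div_mul_eq_mul_div, le_div_iff₀ (exp_pos _)]
  linarith

end IntegratingFactor

theorem tendsto_sub_mul_log_sub_nhdsLT (a s : ℝ) {c : ℝ} (hc : 0 < c) :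
    Tendsto (fun t => a * t - c * log (s - t)) (𝓝[<] s) atTop := by
  have hsub : Tendsto (fun t => s - t) (𝓝[<] s) (𝓝[>] 0) := by
    refine tendsto_nhdsWithin_of_tendsto_nhds_of_eventually_within _ ?_ ?_
    · have : Tendsto (fun t => s - t) (𝓝 s) (𝓝 (s - s)) := tendsto_const_nhds.sub tendsto_id
      simpa using this.mono_left nhdsWithin_le_nhds
    · filter_upwards [self_mem_nhdsWithin] with t ht using sub_pos.2 (mem_Iio.1 ht)
  have hlog := (tendsto_neg_atBot_atTop.comp (tendsto_log_nhdsGT_zero.comp hsub)).const_mul_atTop hc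
  have hlin : Tendsto (fun t => a * t) (𝓝[<] s) (𝓝 (a * s)) :=
    ((continuous_const_mul a).tendsto s).mono_left nhdsWithin_le_nhds
  simpa [sub_eq_add_neg] using hlin.add_atTop hlog

theorem hasDerivAt_tsf_of_lt {v T t₀ t : ℝ} (hT : 0 < T) (ht : t < T + t₀) :
    HasDerivAt (tsf v T t₀) (v / (T + t₀ - t) * tsf v T t₀ t) t := by
  have heq : tsf v T t₀ =ᶠ[𝓝 t] fun x => exp (v * (log T - log (T + t₀ - x))) := by
    filter_upwards [Iio_mem_nhds ht] with x hx
    rw [tsf, if_pos (mem_Iio.1 hx), rpow_def_of_pos hT, rpow_def_of_pos (sub_pos.2 hx),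
      ← exp_sub]
    ring_nf
  have hs : T + t₀ - t ≠ 0 := (sub_pos.2 ht).ne'
  have := (((hasDerivAt_id t).const_sub (T + t₀)).log hs).const_sub (log T) |>.const_mul v |>.exp
  rw [heq.eq_of_nhds]
  refine (this.congr_of_eventuallyEq heq).congr_deriv ?_
  simp only [id]
  field_simp

theorem deriv_tsf_of_gt {v T t₀ t : ℝ} (ht : T + t₀ < t) : deriv (tsf v T t₀) t = 0 := by
  have heq : tsf v T t₀ =ᶠ[𝓝 t] fun _ => 1 := by
    filter_upwards [Ioi_mem_nhds ht] with x hx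
    rw [tsf, if_neg (not_lt.2 hx.le)]
  rw [heq.deriv_eq, deriv_const]

theorem deriv_tsf_div_tsf_of_lt {v T t₀ t : ℝ} (hT : 0 < T) (ht : t < T + t₀) :
    deriv (tsf v T t₀) t / tsf v T t₀ t = v / (T + t₀ - t) := by
  have hpos : 0 < tsf v T t₀ t := by
    rw [tsf, if_pos ht]
    exact div_pos (rpow_pos_of_pos hT v) (rpow_pos_of_pos (sub_pos.2 ht) v)
  rw [(hasDerivAt_tsf_of_lt hT ht).deriv, mul_div_cancel_right₀ _ hpos.ne']

theorem tendsto_nhdsLT_zero_of_deriv_le {V V' : ℝ → ℝ} {t₀ s a c : ℝ} (hts : t₀ < s)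
    (hc : 0 < c) (hV_nonneg : ∀ t ∈ Ico t₀ s, 0 ≤ V t) (hV : ContinuousOn V (Ico t₀ s))
    (hV' : ∀ t ∈ Ioo t₀ s, HasDerivAt V (V' t) t)
    (hle : ∀ t ∈ Ioo t₀ s, V' t ≤ -(a + c / (s - t)) * V t) :
    Tendsto V (𝓝[<] s) (𝓝 0) := by
  set φ : ℝ → ℝ := fun t => a * t - c * log (s - t)
  have hφ : ContinuousOn φ (Ico t₀ s) :=
    (continuousOn_const.mul continuousOn_id).sub <| continuousOn_const.mul <|
      (continuousOn_const.sub continuousOn_id).log fun t ht => (sub_pos.2 ht.2).ne'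
  have hφ' : ∀ t ∈ Ioo t₀ s, HasDerivAt φ (a + c / (s - t)) t := fun t ht => by
    refine (((hasDerivAt_id t).const_mul a).sub
      ((((hasDerivAt_id t).const_sub s).log (sub_pos.2 ht.2).ne').const_mul c)).congr_deriv ?_
    simp only [id]
    ring
  have hbound : ∀ t ∈ Ico t₀ s, V t ≤ exp (φ t₀ - φ t) * V t₀ := fun t ht =>
    le_exp_sub_mul_of_deriv_le (convex_Ico t₀ s) hV hφ (by rwa [interior_Ico])
      (by rwa [interior_Ico]) (by rwa [interior_Ico]) (left_mem_Ico.2 hts) ht ht.1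
  have hdecay : Tendsto (fun t => exp (φ t₀ - φ t) * V t₀) (𝓝[<] s) (𝓝 0) := by
    have hφ_top : Tendsto φ (𝓝[<] s) atTop := tendsto_sub_mul_log_sub_nhdsLT a s hc
    have := tendsto_atBot_add_const_left _ (φ t₀) (tendsto_neg_atTop_atBot.comp hφ_top)
    simpa only [Function.comp_def, sub_eq_add_neg, zero_mul]
      using (tendsto_exp_atBot.comp this).mul_const (V t₀)
  exact tendsto_of_tendsto_of_tendsto_of_le_of_le' tendsto_const_nhds hdecay
    (eventually_of_mem (Ico_mem_nhdsLT hts) hV_nonneg)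
    (eventually_of_mem (Ico_mem_nhdsLT hts) hbound)

theorem eq_zero_of_deriv_le_neg_mul {V V' : ℝ → ℝ} {s a : ℝ}
    (hV_nonneg : ∀ t ∈ Ici s, 0 ≤ V t) (hV : ContinuousOn V (Ici s)) (hVs : V s = 0)
    (hV' : ∀ t ∈ Ioi s, HasDerivAt V (V' t) t) (hle : ∀ t ∈ Ioi s, V' t ≤ -a * V t)
    {t : ℝ} (ht : s ≤ t) : V t = 0 := by
  refine le_antisymm ?_ (hV_nonneg t ht)
  calc V t ≤ exp (a * s - a * t) * V s :=
        le_exp_sub_mul_of_deriv_le (convex_Ici s) hV (continuous_const_mul a).continuousOn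
          (by rwa [interior_Ici])
          (fun t _ => ((hasDerivAt_id t).const_mul a).congr_deriv (mul_one a))
          (by rwa [interior_Ici]) self_mem_Ici ht ht
    _ = 0 := by rw [hVs, mul_zero]

theorem lyapunov_prescribed_time_convergence_general (v T t₀ a b : ℝ) (hv : 2 < v) (hT : 0 < T)
    (hb : 0 < b) (V V' : ℝ → ℝ)
    (hV_nonneg : ∀ t ∈ Set.Ici t₀, 0 ≤ V t)
    (hV_cont : ContinuousOn V (Set.Ici t₀))
    (hV_deriv : ∀ t ∈ Set.Ioo t₀ (T + t₀) ∪ Set.Ioi (T + t₀), HasDerivAt V (V' t) t)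
    (hV_ineq : ∀ t ∈ Set.Ioo t₀ (T + t₀) ∪ Set.Ioi (T + t₀),
      V' t ≤ -a * V t - b * (deriv (tsf v T t₀) t / tsf v T t₀ t) * V t) :
    Filter.Tendsto V (nhdsWithin (T + t₀) (Set.Iio (T + t₀))) (nhds 0) ∧
    ∀ t, T + t₀ ≤ t → V t = 0 := by
  have hts : t₀ < T + t₀ := by linarith
  have hlim : Tendsto V (𝓝[<] (T + t₀)) (𝓝 0) := by
    refine tendsto_nhdsLT_zero_of_deriv_le (a := a) hts (mul_pos hb (by linarith : 0 < v))
      (fun t ht => hV_nonneg t ht.1) (hV_cont.mono Ico_subset_Ici_self)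
      (fun t ht => hV_deriv t (Or.inl ht)) fun t ht => ?_
    have hineq := hV_ineq t (Or.inl ht)
    rw [deriv_tsf_div_tsf_of_lt hT ht.2] at hineq
    convert hineq using 1
    ring
  have hVs : V (T + t₀) = 0 :=
    tendsto_nhds_unique (((hV_cont (T + t₀) (mem_Ici.2 hts.le)).mono_of_mem_nhdsWithin
      (mem_of_superset (Ico_mem_nhdsLT hts) Ico_subset_Ici_self)).tendsto) hlim
  refine ⟨hlim, fun t ht => eq_zero_of_deriv_le_neg_mul (a := a)
    (fun t ht => hV_nonneg t (hts.le.trans ht)) (hV_cont.mono (Ici_subset_Ici.2 hts.le)) hVs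
    (fun t ht => hV_deriv t (Or.inr ht)) (fun t ht => ?_) ht⟩
  simpa only [deriv_tsf_of_gt ht, zero_div, mul_zero, zero_mul, sub_zero]
    using hV_ineq t (Or.inr ht)

/-- Prescribed-time convergence: if V ≥ 0 is continuous on [t₀, ∞), differentiable on
(t₀, T + t₀) ∪ (T + t₀, ∞) and satisfies V' ≤ −a·V − b·(μ'/μ)·V wherever differentiable
(a, b > 0), then V(t) → 0 as t → (T + t₀)⁻ and V(t) = 0 for all t ≥ T + t₀. -/
theorem lyapunov_prescribed_time_convergence (v T t₀ a b : ℝ) (hv : 2 < v) (hT : 0 < T)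
    (ha : 0 < a) (hb : 0 < b) (V V' : ℝ → ℝ)
    (hV_nonneg : ∀ t ∈ Set.Ici t₀, 0 ≤ V t)
    (hV_cont : ContinuousOn V (Set.Ici t₀))
    (hV_deriv : ∀ t ∈ Set.Ioo t₀ (T + t₀) ∪ Set.Ioi (T + t₀), HasDerivAt V (V' t) t)
    (hV_ineq : ∀ t ∈ Set.Ioo t₀ (T + t₀) ∪ Set.Ioi (T + t₀),
      V' t ≤ -a * V t - b * (deriv (tsf v T t₀) t / tsf v T t₀ t) * V t) :
    Filter.Tendsto V (nhdsWithin (T + t₀) (Set.Iio (T + t₀))) (nhds 0) ∧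
    ∀ t, T + t₀ ≤ t → V t = 0 :=
  lyapunov_prescribed_time_convergence_general v T t₀ a b hv hT hb V V' hV_nonneg hV_cont hV_deriv
    hV_ineq
end

section
/- Let G be a connected simple graph on the vertex set Fin N with N ≥ 1, let L ∈ ℝ^{N×N} be its graph Laplacian matrix, and let B = diag(b₁, …, b_N) be a diagonal matrix with each b_i ∈ {0, 1} and b_i = 1 for at least one index i. Then the matrix H = L + B is symmetric and positive definite. -/
open Matrix

/-! The quadratic form of `L + B` is `∑_{i ~ j} (x_i - x_j)² + ∑ b_i x_i²`, a sum of two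
nonnegative terms. If it vanishes, the first term forces `x` to be constant on the connected
graph, and the second then forces that constant to vanish at a pinned vertex. -/

variable {V : Type*} [Fintype V] [DecidableEq V]

namespace Matrix

lemma dotProduct_diagonal_mulVec {R : Type*} [CommSemiring R] (b x : V → R) :
    x ⬝ᵥ (diagonal b *ᵥ x) = ∑ i, b i * x i ^ 2 := by
  simp only [dotProduct, mulVec_diagonal]
  exact Finset.sum_congr rfl fun i _ => by ring

lemma dotProduct_diagonal_mulVec_pos {R : Type*} [CommRing R] [LinearOrder R]
    [IsStrictOrderedRing R] {b x : V → R} (hb : 0 ≤ b) {i₀ : V} (hi₀ : 0 < b i₀)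
    (hx : x i₀ ≠ 0) : 0 < x ⬝ᵥ (diagonal b *ᵥ x) := by
  rw [dotProduct_diagonal_mulVec]
  calc 0 < b i₀ * x i₀ ^ 2 := by positivity
    _ ≤ ∑ i, b i * x i ^ 2 :=
      Finset.single_le_sum (fun i _ => mul_nonneg (hb i) (sq_nonneg (x i))) (Finset.mem_univ i₀)

end Matrix

namespace SimpleGraph

lemma dotProduct_lapMatrix_mulVec_pos (G : SimpleGraph V) [DecidableRel G.Adj]
    (hG : G.Connected) {x : V → ℝ} {i j : V} (hij : x i ≠ x j) :
    0 < x ⬝ᵥ (G.lapMatrix ℝ *ᵥ x) := by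
  refine lt_of_le_of_ne (by simpa using (posSemidef_lapMatrix ℝ G).dotProduct_mulVec_nonneg x) ?_
  intro hzero
  rw [eq_comm, ← toLinearMap₂'_apply',
    lapMatrix_toLinearMap₂'_apply'_eq_zero_iff_forall_reachable] at hzero
  exact hij (hzero i j (hG.preconnected i j))

theorem posDef_lapMatrix_add_diagonal (G : SimpleGraph V) [DecidableRel G.Adj]
    (hG : G.Connected) {b : V → ℝ} (hb : 0 ≤ b) {i₀ : V} (hi₀ : 0 < b i₀) :
    (G.lapMatrix ℝ + diagonal b).PosDef := by
  refine .of_dotProduct_mulVec_pos ((isHermitian_lapMatrix ℝ G).add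
    (PosSemidef.diagonal hb).isHermitian) fun x hx => ?_
  have hL := (posSemidef_lapMatrix ℝ G).dotProduct_mulVec_nonneg x
  have hB := (PosSemidef.diagonal hb).dotProduct_mulVec_nonneg x
  rw [star_trivial] at hL hB ⊢
  rw [add_mulVec, dotProduct_add]
  by_cases hconst : ∀ j, x j = x i₀
  · have hxi₀ : x i₀ ≠ 0 := fun h => hx (funext fun j => (hconst j).trans h)
    linarith [dotProduct_diagonal_mulVec_pos hb hi₀ hxi₀]
  · obtain ⟨j, hj⟩ := not_forall.mp hconst
    linarith [dotProduct_lapMatrix_mulVec_pos G hG hj]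

end SimpleGraph

theorem lap_plus_pinning_posDef_general (N : ℕ)
    (G : SimpleGraph (Fin N)) [DecidableRel G.Adj] (hconn : G.Connected)
    (b : Fin N → ℝ) (hb : ∀ i, b i = 0 ∨ b i = 1) (hex : ∃ i, b i = 1) :
    (G.lapMatrix ℝ + Matrix.diagonal b).IsSymm ∧
    (G.lapMatrix ℝ + Matrix.diagonal b).PosDef := by
  have hb_nonneg : 0 ≤ b := fun i => by rcases hb i with h | h <;> simp [h]
  obtain ⟨i₀, hi₀⟩ := hex
  exact ⟨(G.isSymm_lapMatrix (R := ℝ)).add (isSymm_diagonal b),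
    SimpleGraph.posDef_lapMatrix_add_diagonal G hconn hb_nonneg (hi₀ ▸ one_pos)⟩

/-- Lemma 2: for a connected simple graph G on N ≥ 1 vertices with Laplacian L, and a
diagonal matrix B = diag(b₁,…,b_N) with b_i ∈ {0,1} and b_i = 1 for at least one i,
the matrix H = L + B is symmetric and positive definite. -/
theorem lap_plus_pinning_posDef (N : ℕ) (hN : 1 ≤ N)
    (G : SimpleGraph (Fin N)) [DecidableRel G.Adj] (hconn : G.Connected)
    (b : Fin N → ℝ) (hb : ∀ i, b i = 0 ∨ b i = 1) (hex : ∃ i, b i = 1) :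
    (G.lapMatrix ℝ + Matrix.diagonal b).IsSymm ∧
    (G.lapMatrix ℝ + Matrix.diagonal b).PosDef :=
  lap_plus_pinning_posDef_general N G hconn b hb hex
end

section
/- Let H ∈ ℝ^{N×N} be symmetric positive definite, let A₀ ∈ ℝ^{n×n}, B₀ ∈ ℝ^{n×m}, and let P₀ ∈ ℝ^{n×n} be symmetric positive definite satisfying the Riccati equation A₀ᵀ P₀ + P₀ A₀ − P₀ B₀ B₀ᵀ P₀ + I_n = 0. Let C = diag(c₁, …, c_N) with every c_i ≥ 1/λ_min(H). Then for every ξ ∈ ℝ^{Nn}: ξᵀ (H ⊗ (A₀ᵀ P₀ + P₀ A₀) − H C H ⊗ P₀ B₀ B₀ᵀ P₀) ξ ≤ −λ_min(H)·‖ξ‖² ≤ −(λ_min(H)/λ_max(H ⊗ P₀)) · ξᵀ (H ⊗ P₀) ξ. -/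
open Matrix
open scoped Kronecker

/-- Euclidean norm of a finitely-indexed real vector. -/
noncomputable def enorm {ι : Type*} [Fintype ι] (x : ι → ℝ) : ℝ :=
  ‖(EuclideanSpace.equiv ι ℝ).symm x‖

/-!
The Riccati equation turns `A₀ᵀP₀ + P₀A₀` into `R - 1` with `R = P₀B₀B₀ᵀP₀ ⪰ 0`, so the
matrix of the quadratic form equals `-λ • 1 - ((H - λ • 1) ⊗ 1 + (HCH - H) ⊗ R)`, where
`λ = λ_min(H)`. Both Kronecker products are positive semidefinite: `H ⪰ λ • 1`, and
`C ⪰ λ⁻¹ • 1` gives `HCH ⪰ λ⁻¹ H² ⪰ H`. The second inequality is the Rayleigh bound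
`ξᵀ(H ⊗ P₀)ξ ≤ λ_max(H ⊗ P₀) ‖ξ‖²`.
-/

open scoped ComplexOrder MatrixOrder

namespace Matrix

variable {ι κ 𝕜 : Type*} [RCLike 𝕜]

theorem sub_kronecker {R : Type*} [NonUnitalNonAssocRing R] {l m n p : Type*}
    (A₁ A₂ : Matrix l m R) (B : Matrix n p R) : (A₁ - A₂) ⊗ₖ B = A₁ ⊗ₖ B - A₂ ⊗ₖ B := by
  ext; simp [sub_mul]

theorem kronecker_sub {R : Type*} [NonUnitalNonAssocRing R] {l m n p : Type*}
    (A : Matrix l m R) (B₁ B₂ : Matrix n p R) : A ⊗ₖ (B₁ - B₂) = A ⊗ₖ B₁ - A ⊗ₖ B₂ := by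
  ext; simp [mul_sub]

theorem IsHermitian.smul_one_le_of_le_eigenvalues [Fintype ι] [DecidableEq ι] {M : Matrix ι ι 𝕜}
    (hM : M.IsHermitian) {c : ℝ} (hc : ∀ i, c ≤ hM.eigenvalues i) : c • 1 ≤ M := by
  rw [← Algebra.algebraMap_eq_smul_one]
  refine algebraMap_le_of_le_spectrum (fun x hx => ?_) hM
  obtain ⟨i, rfl⟩ := hM.spectrum_real_eq_range_eigenvalues ▸ hx
  exact hc i

theorem IsHermitian.le_smul_one_of_eigenvalues_le [Fintype ι] [DecidableEq ι] {M : Matrix ι ι 𝕜}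
    (hM : M.IsHermitian) {c : ℝ} (hc : ∀ i, hM.eigenvalues i ≤ c) : M ≤ c • 1 := by
  rw [← Algebra.algebraMap_eq_smul_one]
  refine le_algebraMap_of_spectrum_le (fun x hx => ?_) hM
  obtain ⟨i, rfl⟩ := hM.spectrum_real_eq_range_eigenvalues ▸ hx
  exact hc i

theorem IsHermitian.iInf_eigenvalues_smul_one_le [Fintype ι] [DecidableEq ι] {M : Matrix ι ι 𝕜}
    (hM : M.IsHermitian) : (⨅ i, hM.eigenvalues i) • 1 ≤ M :=
  hM.smul_one_le_of_le_eigenvalues fun i => ciInf_le (Finite.bddBelow_range _) i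

theorem IsHermitian.le_iSup_eigenvalues_smul_one [Fintype ι] [DecidableEq ι] {M : Matrix ι ι 𝕜}
    (hM : M.IsHermitian) : M ≤ (⨆ i, hM.eigenvalues i) • 1 :=
  hM.le_smul_one_of_eigenvalues_le fun i => le_ciSup (Finite.bddAbove_range _) i

theorem PosDef.iInf_eigenvalues_pos [Fintype ι] [DecidableEq ι] [Nonempty ι] {M : Matrix ι ι 𝕜}
    (hM : M.PosDef) : 0 < ⨅ i, hM.1.eigenvalues i := by
  obtain ⟨i, hi⟩ := exists_eq_ciInf_of_finite (f := hM.1.eigenvalues)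
  exact hi ▸ hM.eigenvalues_pos i

theorem PosSemidef.iSup_eigenvalues_nonneg [Fintype ι] [DecidableEq ι] {M : Matrix ι ι 𝕜}
    (hM : M.PosSemidef) : 0 ≤ ⨆ i, hM.1.eigenvalues i :=
  Real.iSup_nonneg hM.eigenvalues_nonneg

theorem smul_one_le_diagonal [DecidableEq ι] {a : ℝ} {d : ι → ℝ} (h : ∀ i, a ≤ d i) :
    a • 1 ≤ diagonal d := by
  rw [le_iff, smul_one_eq_diagonal, diagonal_sub]
  exact PosSemidef.diagonal fun i => sub_nonneg.mpr (h i)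

theorem le_mul_mul_self_of_smul_one_le [Fintype ι] [DecidableEq ι] {H D : Matrix ι ι ℝ} {l : ℝ}
    (hl : 0 < l) (hH : l • 1 ≤ H) (hD : l⁻¹ • 1 ≤ D) : H ≤ H * D * H := by
  have hH' : (H - l • 1).PosSemidef := le_iff.mp hH
  have hHerm : H.IsHermitian := by
    simpa using hH'.1.add (isHermitian_one.smul (IsSelfAdjoint.all l))
  have hdecomp : H * D * H - H =
      Hᴴ * (D - l⁻¹ • 1) * H + l⁻¹ • ((H - l • 1)ᴴ * (H - l • 1)) + (H - l • 1) := by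
    rw [hHerm.eq, hH'.1.eq]
    simp only [mul_sub, sub_mul, mul_smul_comm, smul_mul_assoc, mul_one, one_mul]
    match_scalars <;> field_simp <;> ring
  rw [le_iff, hdecomp]
  exact ((le_iff.mp hD).conjTranspose_mul_mul_same H |>.add
    ((posSemidef_conjTranspose_mul_self _).smul (inv_nonneg.mpr hl.le))).add hH'

theorem kronecker_sub_one_sub_kronecker_le [Fintype ι] [DecidableEq ι] [Fintype κ] [DecidableEq κ]
    {l : ℝ} {H G : Matrix ι ι 𝕜} {R : Matrix κ κ 𝕜} (hH : l • 1 ≤ H) (hG : H ≤ G)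
    (hR : R.PosSemidef) : H ⊗ₖ (R - 1) - G ⊗ₖ R ≤ -l • 1 := by
  have hdecomp : -l • 1 - (H ⊗ₖ (R - 1) - G ⊗ₖ R) = (H - l • 1) ⊗ₖ 1 + (G - H) ⊗ₖ R := by
    rw [neg_smul, kronecker_sub, sub_kronecker, sub_kronecker, ← one_kronecker_one, ← smul_kronecker]
    abel
  rw [le_iff, hdecomp]
  exact ((le_iff.mp hH).kronecker PosSemidef.one).add ((le_iff.mp hG).kronecker hR)

theorem dotProduct_mulVec_le_of_le [Fintype ι] {M N : Matrix ι ι ℝ} (h : M ≤ N) (x : ι → ℝ) :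
    x ⬝ᵥ M *ᵥ x ≤ x ⬝ᵥ N *ᵥ x := by
  have := (le_iff.mp h).dotProduct_mulVec_nonneg x
  rwa [star_trivial, sub_mulVec, dotProduct_sub, sub_nonneg] at this

theorem dotProduct_smul_one_mulVec [Fintype ι] [DecidableEq ι] (c : ℝ) (x : ι → ℝ) :
    x ⬝ᵥ (c • 1 : Matrix ι ι ℝ) *ᵥ x = c * (x ⬝ᵥ x) := by
  rw [smul_mulVec, one_mulVec, dotProduct_smul, smul_eq_mul]

end Matrix

theorem enorm_sq_eq_dotProduct {ι : Type*} [Fintype ι] (x : ι → ℝ) :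
    _root_.enorm x ^ 2 = x ⬝ᵥ x := by
  rw [_root_.enorm, EuclideanSpace.norm_sq_eq]
  simp [dotProduct, sq]

theorem observer_quadratic_form_bound_general (N n m : ℕ) (hN : 0 < N)
    (H : Matrix (Fin N) (Fin N) ℝ) (hH : H.PosDef)
    (A₀ P₀ : Matrix (Fin n) (Fin n) ℝ) (B₀ : Matrix (Fin n) (Fin m) ℝ)
    (hP₀ : P₀.PosDef)
    (hRic : A₀ᵀ * P₀ + P₀ * A₀ - P₀ * B₀ * B₀ᵀ * P₀ + 1 = 0)
    (c : Fin N → ℝ) (hc : ∀ i, 1 / (⨅ j, hH.1.eigenvalues j) ≤ c i)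
    (hKron : (H ⊗ₖ P₀).IsHermitian) :
    ∀ ξ : Fin N × Fin n → ℝ,
      ξ ⬝ᵥ ((H ⊗ₖ (A₀ᵀ * P₀ + P₀ * A₀))
          - ((H * Matrix.diagonal c * H) ⊗ₖ (P₀ * B₀ * B₀ᵀ * P₀))) *ᵥ ξ
        ≤ -(⨅ j, hH.1.eigenvalues j) * (_root_.enorm ξ) ^ 2 ∧
      -(⨅ j, hH.1.eigenvalues j) * (_root_.enorm ξ) ^ 2
        ≤ -((⨅ j, hH.1.eigenvalues j) / (⨆ p, hKron.eigenvalues p))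
            * (ξ ⬝ᵥ (H ⊗ₖ P₀) *ᵥ ξ) := by
  intro ξ
  have : Nonempty (Fin N) := Fin.pos_iff_nonempty.mp hN
  set l := ⨅ j, hH.1.eigenvalues j
  set μ := ⨆ p, hKron.eigenvalues p
  have hl : 0 < l := hH.iInf_eigenvalues_pos
  have hμ : 0 ≤ μ := (hH.kronecker hP₀).posSemidef.iSup_eigenvalues_nonneg
  have hLyap : A₀ᵀ * P₀ + P₀ * A₀ = P₀ * B₀ * B₀ᵀ * P₀ - 1 := by
    rw [← sub_eq_zero, ← hRic]; abel
  have hR : (P₀ * B₀ * B₀ᵀ * P₀).PosSemidef := by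
    have h := posSemidef_self_mul_conjTranspose (P₀ * B₀)
    rwa [conjTranspose_mul, hP₀.1.eq, conjTranspose_eq_transpose_of_trivial, ← Matrix.mul_assoc]
      at h
  have hHCH : H ≤ H * diagonal c * H :=
    le_mul_mul_self_of_smul_one_le hl hH.1.iInf_eigenvalues_smul_one_le
      (smul_one_le_diagonal fun i => by simpa using hc i)
  refine ⟨?_, ?_⟩
  · rw [hLyap, enorm_sq_eq_dotProduct, ← dotProduct_smul_one_mulVec]
    exact dotProduct_mulVec_le_of_le
      (kronecker_sub_one_sub_kronecker_le hH.1.iInf_eigenvalues_smul_one_le hHCH hR) ξ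
  · have hK : ξ ⬝ᵥ (H ⊗ₖ P₀) *ᵥ ξ ≤ μ * _root_.enorm ξ ^ 2 := by
      rw [enorm_sq_eq_dotProduct, ← dotProduct_smul_one_mulVec]
      exact dotProduct_mulVec_le_of_le hKron.le_iSup_eigenvalues_smul_one ξ
    rw [neg_mul, neg_mul, neg_le_neg_iff]
    rcases hμ.eq_or_lt with hμ0 | hμpos
    · rw [← hμ0, div_zero, zero_mul]; positivity
    · calc l / μ * (ξ ⬝ᵥ (H ⊗ₖ P₀) *ᵥ ξ) ≤ l / μ * (μ * _root_.enorm ξ ^ 2) := by gcongr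
        _ = l * _root_.enorm ξ ^ 2 := by field_simp

/-- For H symmetric positive definite, P₀ symmetric positive definite solving the Riccati
equation A₀ᵀ P₀ + P₀ A₀ − P₀ B₀ B₀ᵀ P₀ + I = 0, and C = diag(c₁,…,c_N) with
c_i ≥ 1/λ_min(H), for every ξ:
ξᵀ (H ⊗ (A₀ᵀP₀ + P₀A₀) − H C H ⊗ P₀B₀B₀ᵀP₀) ξ ≤ −λ_min(H)‖ξ‖²
  ≤ −(λ_min(H)/λ_max(H ⊗ P₀)) ξᵀ (H ⊗ P₀) ξ. -/
theorem observer_quadratic_form_bound (N n m : ℕ) (hN : 0 < N) (hn : 0 < n)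
    (H : Matrix (Fin N) (Fin N) ℝ) (hH : H.PosDef)
    (A₀ P₀ : Matrix (Fin n) (Fin n) ℝ) (B₀ : Matrix (Fin n) (Fin m) ℝ)
    (hP₀ : P₀.PosDef)
    (hRic : A₀ᵀ * P₀ + P₀ * A₀ - P₀ * B₀ * B₀ᵀ * P₀ + 1 = 0)
    (c : Fin N → ℝ) (hc : ∀ i, 1 / (⨅ j, hH.1.eigenvalues j) ≤ c i)
    (hKron : (H ⊗ₖ P₀).IsHermitian) :
    ∀ ξ : Fin N × Fin n → ℝ,
      ξ ⬝ᵥ ((H ⊗ₖ (A₀ᵀ * P₀ + P₀ * A₀))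
          - ((H * Matrix.diagonal c * H) ⊗ₖ (P₀ * B₀ * B₀ᵀ * P₀))) *ᵥ ξ
        ≤ -(⨅ j, hH.1.eigenvalues j) * (_root_.enorm ξ) ^ 2 ∧
      -(⨅ j, hH.1.eigenvalues j) * (_root_.enorm ξ) ^ 2
        ≤ -((⨅ j, hH.1.eigenvalues j) / (⨆ p, hKron.eigenvalues p))
            * (ξ ⬝ᵥ (H ⊗ₖ P₀) *ᵥ ξ) :=
  observer_quadratic_form_bound_general N n m hN H hH A₀ P₀ B₀ hP₀ hRic c hc hKron
end

section
/- Let H ∈ ℝ^{N×N} be symmetric positive definite, let β = diag(β₁, …, β_N) with all β_i > 0, and let P ∈ ℝ^{n×n} be symmetric positive semidefinite. Then for every ξ ∈ ℝ^{Nn}, ξᵀ (H β H ⊗ P) ξ ≥ λ_min(β)·λ_min(H) · ξᵀ (H ⊗ P) ξ. -/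
/-!
In the Loewner order, `(min β) • 1 ≤ β`, and conjugating by the symmetric `H` gives
`(min β) • H² ≤ H β H`; the functional calculus gives `λ_min(H) • H ≤ H²`, since
`x² - λ_min(H) x ≥ 0` on the spectrum of `H`. Tensoring with `P ≥ 0` preserves the order, and
the quadratic form of a positive semidefinite matrix is nonnegative.
-/

open Matrix
open scoped Kronecker MatrixOrder ComplexOrder

namespace Matrix

variable {ι m n 𝕜 : Type*} [RCLike 𝕜] [Fintype m] [Fintype n]

lemma iInf_smul_one_le_diagonal [Fintype ι] [DecidableEq ι] (b : ι → ℝ) :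
    (⨅ i, b i) • (1 : Matrix ι ι ℝ) ≤ diagonal b := by
  rw [le_iff, smul_one_eq_diagonal, diagonal_sub, posSemidef_diagonal_iff]
  exact fun i => sub_nonneg.mpr (ciInf_le (Set.finite_range b).bddBelow i)

lemma PosSemidef.iInf_eigenvalues_smul_le_mul_self [DecidableEq n] {A : Matrix n n 𝕜}
    (hA : A.PosSemidef) : (⨅ i, hA.1.eigenvalues i) • A ≤ A * A := by
  set c := ⨅ i, hA.1.eigenvalues i
  have hcfc : A * A - c • A = cfc (fun x : ℝ => x * x - c * x) A := by
    rw [cfc_sub .., cfc_mul .., cfc_const_mul .., cfc_id' ..]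
  rw [le_iff, hcfc, ← nonneg_iff_posSemidef]
  refine cfc_nonneg fun x hx => ?_
  obtain ⟨i, rfl⟩ := hA.1.spectrum_real_eq_range_eigenvalues ▸ hx
  have hci : c ≤ hA.1.eigenvalues i := ciInf_le (Set.finite_range hA.1.eigenvalues).bddBelow i
  nlinarith [hA.eigenvalues_nonneg i]

lemma kronecker_le_kronecker_right {A B : Matrix m m 𝕜} {P : Matrix n n 𝕜} (hAB : A ≤ B)
    (hP : P.PosSemidef) : A ⊗ₖ P ≤ B ⊗ₖ P := by
  have hsub : B ⊗ₖ P - A ⊗ₖ P = (B - A) ⊗ₖ P := by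
    rw [sub_eq_iff_eq_add, ← add_kronecker, sub_add_cancel]
  rw [le_iff, hsub]
  exact hAB.kronecker hP

lemma dotProduct_mulVec_le_of_le_s9 {A B : Matrix n n ℝ} (h : A ≤ B) (x : n → ℝ) :
    x ⬝ᵥ A *ᵥ x ≤ x ⬝ᵥ B *ᵥ x := by
  simpa [sub_mulVec, dotProduct_sub] using h.dotProduct_mulVec_nonneg x

end Matrix

theorem HbetaH_kron_lower_bound_general (N n : ℕ)
    (H : Matrix (Fin N) (Fin N) ℝ) (hH : H.PosDef)
    (b : Fin N → ℝ) (hb : ∀ i, 0 < b i)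
    (P : Matrix (Fin n) (Fin n) ℝ) (hP : P.PosSemidef) :
    ∀ ξ : Fin N × Fin n → ℝ,
      (⨅ i, b i) * (⨅ j, hH.1.eigenvalues j) * (ξ ⬝ᵥ (H ⊗ₖ P) *ᵥ ξ)
        ≤ ξ ⬝ᵥ ((H * Matrix.diagonal b * H) ⊗ₖ P) *ᵥ ξ := by
  intro ξ
  set a := ⨅ i, b i
  have ha : 0 ≤ a := Real.iInf_nonneg fun i => (hb i).le
  have hHβH : a • (H * H) ≤ H * diagonal b * H := by
    simpa using hH.1.isSelfAdjoint.conjugate_le_conjugate (iInf_smul_one_le_diagonal b)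
  have hH2 : (a * ⨅ j, hH.1.eigenvalues j) • H ≤ a • (H * H) := by
    rw [mul_smul]
    exact smul_le_smul_of_nonneg_left hH.posSemidef.iInf_eigenvalues_smul_le_mul_self ha
  simpa [smul_kronecker, smul_mulVec, dotProduct_smul] using
    dotProduct_mulVec_le_of_le_s9 (kronecker_le_kronecker_right (hH2.trans hHβH) hP) ξ

/-- For H symmetric positive definite, β = diag(β₁,…,β_N) with all β_i > 0, and P symmetric
positive semidefinite: ξᵀ (H β H ⊗ P) ξ ≥ λ_min(β)·λ_min(H)·ξᵀ (H ⊗ P) ξ for all ξ. -/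
theorem HbetaH_kron_lower_bound (N n : ℕ) (hN : 0 < N)
    (H : Matrix (Fin N) (Fin N) ℝ) (hH : H.PosDef)
    (b : Fin N → ℝ) (hb : ∀ i, 0 < b i)
    (P : Matrix (Fin n) (Fin n) ℝ) (hP : P.PosSemidef) :
    ∀ ξ : Fin N × Fin n → ℝ,
      (⨅ i, b i) * (⨅ j, hH.1.eigenvalues j) * (ξ ⬝ᵥ (H ⊗ₖ P) *ᵥ ξ)
        ≤ ξ ⬝ᵥ ((H * Matrix.diagonal b * H) ⊗ₖ P) *ᵥ ξ :=
  HbetaH_kron_lower_bound_general N n H hH b hb P hP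
end
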